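/- Connected correlation bound for the entanglement spectrum: let ρ be a state on H_A ⊗ H_B such that |C(O₁,O₂)| ≤ ‖O₁‖‖O₂‖ε for all operators O₁ on H_A and O₂ on H_B, where C(O₁,O₂) = ⟨O₁O₂⟩ - ⟨O₁⟩⟨O₂⟩ and 0 < ε < 1/e. Then for any operator O on H_B, |C(Ĥ_A, O)| ≤ ε‖O‖(18 log d_A + 4 log(1/ε)), where Ĥ_A = -(log ρ_A) ⊗ I_B and d_A = dim H_A ≥ 2. -/

import Mathlib

noncomputable section
open Matrix Finset
open scoped ComplexOrder

/-- Matrix logarithm via the spectral decomposition (junk value `0` for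
non-Hermitian input). -/
def matLog {n : Type*} [Fintype n] [DecidableEq n] (ρ : Matrix n n ℂ) :
    Matrix n n ℂ :=
  if h : ρ.IsHermitian then
    (h.eigenvectorUnitary : Matrix n n ℂ) *
      Matrix.diagonal (fun i => (Real.log (h.eigenvalues i) : ℂ)) *
      star (h.eigenvectorUnitary : Matrix n n ℂ)
  else 0

/-- Trace norm `‖X‖₁ = Tr √(XᴴX)`. -/
def traceNorm {n : Type*} [Fintype n] [DecidableEq n] (X : Matrix n n ℂ) : ℝ :=
  (((Matrix.posSemidef_conjTranspose_mul_self X).1.eigenvectorUnitary : Matrix n n ℂ) *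
    Matrix.diagonal (fun i => ((Real.sqrt ((Matrix.posSemidef_conjTranspose_mul_self X).1.eigenvalues i) : ℝ) : ℂ)) *
    star ((Matrix.posSemidef_conjTranspose_mul_self X).1.eigenvectorUnitary : Matrix n n ℂ)).trace.re

/-- Operator (spectral) norm of a matrix. -/
def opNorm {n : Type*} [Fintype n] [DecidableEq n] (X : Matrix n n ℂ) : ℝ :=
  ‖Matrix.toEuclideanCLM (𝕜 := ℂ) X‖

/-- A density matrix: positive semidefinite with unit trace. -/
def IsDensityMatrix {n : Type*} [Fintype n] [DecidableEq n]
    (ρ : Matrix n n ℂ) : Prop :=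
  ρ.PosSemidef ∧ ρ.trace = 1

variable {α β : Type*} [Fintype α] [Fintype β] [DecidableEq α] [DecidableEq β]

/-- Partial trace over the second factor. -/
def ptrB (ρ : Matrix (α × β) (α × β) ℂ) : Matrix α α ℂ :=
  Matrix.of fun a a' => ∑ b : β, ρ (a, b) (a', b)

/-- Extension of an operator on `A` by the identity on `B`. -/
def extA (M : Matrix α α ℂ) : Matrix (α × β) (α × β) ℂ :=
  Matrix.of fun x y => M x.1 y.1 * (if x.2 = y.2 then 1 else 0)

/-- Extension of an operator on `B` by the identity on `A`. -/
def extB (M : Matrix β β ℂ) : Matrix (α × β) (α × β) ℂ :=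
  Matrix.of fun x y => (if x.1 = y.1 then 1 else 0) * M x.2 y.2

/-- The truncated tail `Δ_A^Λ` of the entanglement spectrum of `ρ_A`:
`-Σ_{p_i < 1/Λ} (log p_i) |i⟩⟨i|` in the eigenbasis of `ρ_A`. -/
def specTail (ρA : Matrix α α ℂ) (Λ : ℝ) : Matrix α α ℂ :=
  if h : ρA.IsHermitian then
    (h.eigenvectorUnitary : Matrix α α ℂ) *
      Matrix.diagonal (fun i =>
        if h.eigenvalues i < 1 / Λ then (-(Real.log (h.eigenvalues i)) : ℂ)
        else 0) *
      star (h.eigenvectorUnitary : Matrix α α ℂ)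
  else 0

/-- Connected correlation function `C(X,Y) = ⟨XY⟩ - ⟨X⟩⟨Y⟩`. -/
def connCorr (ρ X Y : Matrix (α × β) (α × β) ℂ) : ℂ :=
  (ρ * (X * Y)).trace - (ρ * X).trace * (ρ * Y).trace

/-! Split `-log ρ_A = H + Δ` spectrally at the cutoff `1/Λ`, with `Δ` collecting the eigenvalues
`p < 1/Λ`. The regular part has operator norm at most `log Λ`, so the correlation hypothesis bounds
its contribution by `ε ‖O‖ log Λ`. The tail `Δ` is positive, hence `|C(Δ, O)| ≤ 2 ‖O‖ ⟨Δ⟩`, and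
`⟨Δ⟩ = ∑_{p < 1/Λ} -p log p ≤ 2 d_A / √Λ` because `-p log p ≤ 2 √p`. The choice
`Λ = d_A⁴ / ε²` makes both contributions `O(ε ‖O‖ (log d_A + log (1/ε)))`. -/

open scoped Matrix.Norms.L2Operator MatrixOrder Kronecker
set_option linter.unusedSectionVars false

namespace Matrix

lemma norm_apply_le_l2_opNorm {m n 𝕜 : Type*} [Fintype m] [Fintype n] [DecidableEq n]
    [RCLike 𝕜] (X : Matrix m n 𝕜) (i : m) (j : n) : ‖X i j‖ ≤ ‖X‖ := by
  calc ‖X i j‖ = ‖(EuclideanSpace.equiv m 𝕜).symm (X *ᵥ EuclideanSpace.single j 1) i‖ := by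
        simp
    _ ≤ ‖(EuclideanSpace.equiv m 𝕜).symm (X *ᵥ EuclideanSpace.single j 1)‖ :=
        PiLp.norm_apply_le _ i
    _ ≤ ‖X‖ * ‖EuclideanSpace.single j (1 : 𝕜)‖ := l2_opNorm_mulVec X _
    _ = ‖X‖ := by simp

variable {n : Type*} [Fintype n] [DecidableEq n]

lemma PosSemidef.norm_trace {M : Matrix n n ℂ} (hM : M.PosSemidef) : ‖M.trace‖ = M.trace.re :=
  (Complex.re_eq_norm.mpr hM.trace_nonneg).symm

lemma PosSemidef.norm_trace_mul_le {M : Matrix n n ℂ} (hM : M.PosSemidef) (N : Matrix n n ℂ) :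
    ‖(M * N).trace‖ ≤ ‖N‖ * M.trace.re := by
  set W := hM.1.eigenvectorUnitary
  set U : Matrix n n ℂ := (W : Matrix n n ℂ)
  have hdiag : (M * N).trace = ∑ i, (hM.1.eigenvalues i : ℂ) * (star U * N * U) i i := by
    conv_lhs => rw [hM.1.spectral_theorem, Unitary.conjStarAlgAut_apply]
    rw [mul_assoc _ (star U), trace_mul_comm, ← mul_assoc, trace_mul_comm]
    simp only [trace, Matrix.diag, diagonal_mul, Function.comp_apply]
    rfl
  have hentry (i : n) : ‖(star U * N * U) i i‖ ≤ ‖N‖ := by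
    calc ‖(star U * N * U) i i‖ ≤ ‖star U * N * U‖ := norm_apply_le_l2_opNorm _ i i
      _ = ‖N‖ := by
        rw [CStarRing.norm_mul_coe_unitary, ← Unitary.coe_star, CStarRing.norm_coe_unitary_mul]
  calc ‖(M * N).trace‖ ≤ ∑ i, hM.1.eigenvalues i * ‖N‖ := by
        rw [hdiag]
        refine (norm_sum_le _ _).trans (Finset.sum_le_sum fun i _ => ?_)
        rw [norm_mul, Complex.norm_of_nonneg (hM.eigenvalues_nonneg i)]
        exact mul_le_mul_of_nonneg_left (hentry i) (hM.eigenvalues_nonneg i)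
    _ = ‖N‖ * M.trace.re := by
        simp [hM.1.trace_eq_sum_eigenvalues, Finset.mul_sum, mul_comm]

lemma PosSemidef.eigenvalues_le_re_trace {A : Matrix n n ℂ} (hA : A.PosSemidef) (i : n) :
    hA.1.eigenvalues i ≤ A.trace.re := by
  simpa [hA.1.trace_eq_sum_eigenvalues] using
    Finset.single_le_sum (fun j _ => hA.eigenvalues_nonneg j) (Finset.mem_univ i)

lemma IsHermitian.trace_cfc {A : Matrix n n ℂ} (hA : A.IsHermitian) (f : ℝ → ℝ) :
    (cfc f A).trace = ∑ i, (f (hA.eigenvalues i) : ℂ) := by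
  rw [hA.cfc_eq, IsHermitian.cfc, Unitary.conjStarAlgAut_apply, trace_mul_cycle,
    Unitary.coe_star_mul_self, one_mul, trace_diagonal]
  rfl

end Matrix

lemma opNorm_eq_norm {n : Type*} [Fintype n] [DecidableEq n] (X : Matrix n n ℂ) :
    opNorm X = ‖X‖ := rfl

lemma matLog_eq_cfc {n : Type*} [Fintype n] [DecidableEq n] {A : Matrix n n ℂ}
    (hA : A.IsHermitian) : matLog A = cfc Real.log A := by
  rw [hA.cfc_eq, matLog, dif_pos hA, IsHermitian.cfc, Unitary.conjStarAlgAut_apply]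
  rfl

lemma extA_eq_kronecker (M : Matrix α α ℂ) :
    (extA M : Matrix (α × β) (α × β) ℂ) = M ⊗ₖ 1 := by
  ext ⟨a, b⟩ ⟨a', b'⟩
  simp [extA, one_apply]

lemma extB_eq_kronecker (N : Matrix β β ℂ) :
    (extB N : Matrix (α × β) (α × β) ℂ) = 1 ⊗ₖ N := by
  ext ⟨a, b⟩ ⟨a', b'⟩
  simp [extB, one_apply]

variable (β) in
def extAStarAlgHom : Matrix α α ℂ →⋆ₐ[ℂ] Matrix (α × β) (α × β) ℂ where
  toFun := extA
  map_one' := by simp [extA_eq_kronecker]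
  map_mul' M N := by simp only [extA_eq_kronecker, ← mul_kronecker_mul, mul_one]
  map_zero' := by simp [extA_eq_kronecker]
  map_add' M N := by simp [extA_eq_kronecker, add_kronecker]
  commutes' r := by simp [extA_eq_kronecker, Algebra.algebraMap_eq_smul_one, smul_kronecker]
  map_star' M := by simp [extA_eq_kronecker, star_eq_conjTranspose, conjTranspose_kronecker]

variable (α) in
def extBStarAlgHom : Matrix β β ℂ →⋆ₐ[ℂ] Matrix (α × β) (α × β) ℂ where
  toFun := extB
  map_one' := by simp [extB_eq_kronecker]
  map_mul' M N := by simp only [extB_eq_kronecker, ← mul_kronecker_mul, mul_one]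
  map_zero' := by simp [extB_eq_kronecker]
  map_add' M N := by simp [extB_eq_kronecker, kronecker_add]
  commutes' r := by simp [extB_eq_kronecker, Algebra.algebraMap_eq_smul_one, kronecker_smul]
  map_star' M := by simp [extB_eq_kronecker, star_eq_conjTranspose, conjTranspose_kronecker]

lemma extA_mul (M N : Matrix α α ℂ) :
    (extA (M * N) : Matrix (α × β) (α × β) ℂ) = extA M * extA N :=
  map_mul (extAStarAlgHom β) M N

lemma extA_star (M : Matrix α α ℂ) :
    (extA (star M) : Matrix (α × β) (α × β) ℂ) = star (extA M) :=
  map_star (extAStarAlgHom β) M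

lemma extA_add (M N : Matrix α α ℂ) :
    (extA (M + N) : Matrix (α × β) (α × β) ℂ) = extA M + extA N :=
  map_add (extAStarAlgHom β) M N

lemma extA_neg (M : Matrix α α ℂ) : (extA (-M) : Matrix (α × β) (α × β) ℂ) = -extA M :=
  map_neg (extAStarAlgHom β) M

lemma norm_extB_le (N : Matrix β β ℂ) : ‖(extB N : Matrix (α × β) (α × β) ℂ)‖ ≤ ‖N‖ :=
  NonUnitalStarAlgHom.norm_apply_le (extBStarAlgHom α) N

lemma commute_extA_extB (M : Matrix α α ℂ) (N : Matrix β β ℂ) :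
    Commute (extA M : Matrix (α × β) (α × β) ℂ) (extB N) := by
  simp only [Commute, SemiconjBy, extA_eq_kronecker, extB_eq_kronecker, ← mul_kronecker_mul,
    mul_one, one_mul]

lemma trace_mul_extA (ρ : Matrix (α × β) (α × β) ℂ) (M : Matrix α α ℂ) :
    (ρ * extA M).trace = (ptrB ρ * M).trace := by
  simp only [trace, Matrix.diag, mul_apply, extA, ptrB, of_apply, Fintype.sum_prod_type, mul_ite,
    mul_one, mul_zero, Finset.sum_ite_eq', Finset.mem_univ, if_true, Finset.sum_mul]
  exact Finset.sum_congr rfl fun _ _ => Finset.sum_comm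

lemma trace_ptrB (ρ : Matrix (α × β) (α × β) ℂ) : (ptrB ρ).trace = ρ.trace := by
  simp [trace, ptrB, Fintype.sum_prod_type]

lemma connCorr_add_left (ρ X Y Z : Matrix (α × β) (α × β) ℂ) :
    connCorr ρ (X + Y) Z = connCorr ρ X Z + connCorr ρ Y Z := by
  simp only [connCorr, add_mul, mul_add, trace_add]
  ring

/-- With `Δ = B⋆B`, and `extA B` commuting with `extB O`, both traces in `C(Δ, O)` are traces
against the positive matrix `(extA B) ρ (extA B)⋆`, whose trace is `Tr(ρ_A Δ)`. -/
lemma norm_connCorr_extA_le_of_posSemidef {ρ : Matrix (α × β) (α × β) ℂ}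
    (hρ : IsDensityMatrix ρ) {Δ : Matrix α α ℂ} (hΔ : Δ.PosSemidef) (O : Matrix β β ℂ) :
    ‖connCorr ρ (extA Δ) (extB O)‖ ≤ 2 * ‖O‖ * (ptrB ρ * Δ).trace.re := by
  obtain ⟨B, rfl⟩ := CStarAlgebra.nonneg_iff_eq_star_mul_self.mp hΔ.nonneg
  set b : Matrix (α × β) (α × β) ℂ := extA B
  set o : Matrix (α × β) (α × β) ℂ := extB O
  set M := b * ρ * star b with hM
  have hMpsd : M.PosSemidef := hρ.1.mul_mul_conjTranspose_same b
  have hρΔ : (ρ * extA (star B * B)).trace = M.trace := by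
    rw [extA_mul, extA_star, ← mul_assoc, trace_mul_cycle]
  have hρΔO : (ρ * (extA (star B * B) * o)).trace = (M * o).trace := by
    rw [extA_mul, extA_star, mul_assoc, (commute_extA_extB B O).eq, ← mul_assoc, ← mul_assoc,
      trace_mul_comm]
    simp only [hM, mul_assoc]
    rfl
  have hτ : M.trace.re = (ptrB ρ * (star B * B)).trace.re := by
    rw [← hρΔ, trace_mul_extA]
  have hτ0 : 0 ≤ M.trace.re := hMpsd.norm_trace ▸ norm_nonneg _
  have ho : ‖o‖ ≤ ‖O‖ := norm_extB_le O
  have hρo : ‖(ρ * o).trace‖ ≤ ‖O‖ := by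
    have h := hρ.1.norm_trace_mul_le o
    rw [hρ.2, Complex.one_re, mul_one] at h
    exact h.trans ho
  rw [connCorr, hρΔO, hρΔ, ← hτ]
  calc ‖(M * o).trace - M.trace * (ρ * o).trace‖
      ≤ ‖(M * o).trace‖ + ‖M.trace‖ * ‖(ρ * o).trace‖ :=
        (norm_sub_le _ _).trans_eq (by rw [norm_mul])
    _ ≤ ‖O‖ * M.trace.re + M.trace.re * ‖O‖ := by
        rw [hMpsd.norm_trace]
        gcongr
        exact (hMpsd.norm_trace_mul_le o).trans (by gcongr)
    _ = 2 * ‖O‖ * M.trace.re := by ring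

def logTail (Λ x : ℝ) : ℝ := if x < 1 / Λ then -Real.log x else 0

lemma logTail_nonneg {Λ x : ℝ} (hΛ : 1 ≤ Λ) (hx : 0 < x) : 0 ≤ logTail Λ x := by
  unfold logTail
  split_ifs with h
  · exact neg_nonneg.mpr (Real.log_nonpos hx.le (h.le.trans (div_le_one_of_le₀ hΛ (by linarith))))
  · exact le_rfl

lemma abs_neg_log_sub_logTail_le {Λ x : ℝ} (hΛ : 1 ≤ Λ) (hx : 0 < x) (hx1 : x ≤ 1) :
    |-Real.log x - logTail Λ x| ≤ Real.log Λ := by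
  unfold logTail
  split_ifs with h
  · simp [Real.log_nonneg hΛ]
  · rw [sub_zero, abs_of_nonneg (neg_nonneg.mpr (Real.log_nonpos hx.le hx1))]
    have := Real.log_le_log (by positivity) (not_lt.mp h)
    rw [one_div, Real.log_inv] at this
    linarith

lemma mul_neg_log_le_two_mul_sqrt {x : ℝ} (hx : 0 < x) : x * -Real.log x ≤ 2 * √x := by
  have hs : 0 < √x := Real.sqrt_pos.mpr hx
  have hlog : Real.log (√x)⁻¹ ≤ (√x)⁻¹ - 1 := Real.log_le_sub_one_of_pos (inv_pos.mpr hs)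
  rw [Real.log_inv, Real.log_sqrt hx.le] at hlog
  calc x * -Real.log x ≤ x * (2 * (√x)⁻¹) := by gcongr; linarith
    _ = 2 * (x / √x) := by ring
    _ = 2 * √x := by rw [Real.div_sqrt]

lemma mul_logTail_le {Λ x : ℝ} (hΛ : 0 < Λ) (hx : 0 < x) : x * logTail Λ x ≤ 2 / √Λ := by
  unfold logTail
  split_ifs with h
  · calc x * -Real.log x ≤ 2 * √x := mul_neg_log_le_two_mul_sqrt hx
      _ ≤ 2 * √(1 / Λ) := by gcongr
      _ = 2 / √Λ := by rw [Real.sqrt_div' _ hΛ.le, Real.sqrt_one]; ring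
  · simp only [mul_zero]
    positivity

lemma specTail_eq_cfc {A : Matrix α α ℂ} (hA : A.IsHermitian) (Λ : ℝ) :
    specTail A Λ = cfc (logTail Λ) A := by
  rw [hA.cfc_eq, specTail, dif_pos hA, IsHermitian.cfc, Unitary.conjStarAlgAut_apply]
  congr 3
  ext i
  simp only [Function.comp_apply, logTail]
  split_ifs <;> simp

section
variable {A : Matrix α α ℂ} {Λ : ℝ}

lemma posSemidef_specTail (hA : A.PosDef) (hΛ : 1 ≤ Λ) : (specTail A Λ).PosSemidef := by
  rw [specTail_eq_cfc hA.1, ← nonneg_iff_posSemidef]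
  refine cfc_nonneg fun x hx => ?_
  obtain ⟨i, rfl⟩ := hA.1.spectrum_real_eq_range_eigenvalues ▸ hx
  exact logTail_nonneg hΛ (hA.eigenvalues_pos i)

lemma norm_neg_matLog_sub_specTail_le (hA : A.PosDef) (htr : A.trace = 1) (hΛ : 1 ≤ Λ) :
    ‖-matLog A - specTail A Λ‖ ≤ Real.log Λ := by
  have hcont (f : ℝ → ℝ) : ContinuousOn f (spectrum ℝ A) := A.finite_real_spectrum.continuousOn f
  rw [matLog_eq_cfc hA.1, specTail_eq_cfc hA.1, ← cfc_neg, ← cfc_sub _ _ A (hcont _) (hcont _)]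
  refine norm_cfc_le (Real.log_nonneg hΛ) fun x hx => ?_
  obtain ⟨i, rfl⟩ := hA.1.spectrum_real_eq_range_eigenvalues ▸ hx
  exact abs_neg_log_sub_logTail_le hΛ (hA.eigenvalues_pos i)
    (by simpa [htr] using hA.posSemidef.eigenvalues_le_re_trace i)

lemma re_trace_mul_specTail_le (hA : A.PosDef) (hΛ : 0 < Λ) :
    (A * specTail A Λ).trace.re ≤ Fintype.card α * (2 / √Λ) := by
  have hcont (f : ℝ → ℝ) : ContinuousOn f (spectrum ℝ A) := A.finite_real_spectrum.continuousOn f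
  have hmul : A * cfc (logTail Λ) A = cfc (fun x => x * logTail Λ x) A := by
    rw [cfc_mul _ _ A (hcont _) (hcont _), cfc_id' ℝ A]
  rw [specTail_eq_cfc hA.1, hmul, hA.1.trace_cfc]
  simp only [Complex.re_sum, Complex.ofReal_re]
  calc ∑ i, hA.1.eigenvalues i * logTail Λ (hA.1.eigenvalues i) ≤ ∑ _i : α, 2 / √Λ :=
        Finset.sum_le_sum fun i _ => mul_logTail_le hΛ (hA.eigenvalues_pos i)
    _ = Fintype.card α * (2 / √Λ) := by simp

end

lemma norm_connCorr_neg_matLog_le {ρ : Matrix (α × β) (α × β) ℂ} (hρ : IsDensityMatrix ρ)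
    (hA : (ptrB ρ).PosDef) {ε : ℝ} (hε : 0 ≤ ε)
    (hcorr : ∀ (O₁ : Matrix α α ℂ) (O₂ : Matrix β β ℂ),
      ‖connCorr ρ (extA O₁) (extB O₂)‖ ≤ opNorm O₁ * opNorm O₂ * ε)
    (O : Matrix β β ℂ) {Λ : ℝ} (hΛ : 1 ≤ Λ) :
    ‖connCorr ρ (-(extA (matLog (ptrB ρ)))) (extB O)‖ ≤
      ε * ‖O‖ * Real.log Λ + 4 * ‖O‖ * Fintype.card α / √Λ := by
  set Δ := specTail (ptrB ρ) Λ
  have hsplit : (-extA (matLog (ptrB ρ)) : Matrix (α × β) (α × β) ℂ) =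
      extA (-matLog (ptrB ρ) - Δ) + extA Δ := by
    rw [← extA_add, sub_add_cancel, extA_neg]
  rw [hsplit, connCorr_add_left]
  refine (norm_add_le _ _).trans (add_le_add ?_ ?_)
  · refine (hcorr _ O).trans ?_
    rw [opNorm_eq_norm, opNorm_eq_norm]
    calc _ ≤ Real.log Λ * ‖O‖ * ε := by
          gcongr
          exact norm_neg_matLog_sub_specTail_le hA (by rw [trace_ptrB, hρ.2]) hΛ
      _ = ε * ‖O‖ * Real.log Λ := by ring
  · refine (norm_connCorr_extA_le_of_posSemidef hρ (posSemidef_specTail hA hΛ) O).trans ?_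
    calc 2 * ‖O‖ * (ptrB ρ * Δ).trace.re ≤ 2 * ‖O‖ * (Fintype.card α * (2 / √Λ)) := by
          gcongr
          exact re_trace_mul_specTail_le hA (by linarith)
      _ = 4 * ‖O‖ * Fintype.card α / √Λ := by ring

lemma cutoff_bound_le {d ε c : ℝ} (hd : 2 ≤ d) (hε : 0 < ε) (hE : 1 ≤ Real.log (1 / ε))
    (hc : 0 ≤ c) :
    ε * c * Real.log (d ^ 4 / ε ^ 2) + 4 * c * d / √(d ^ 4 / ε ^ 2) ≤
      ε * c * (18 * Real.log d + 4 * Real.log (1 / ε)) := by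
  have hlogΛ : Real.log (d ^ 4 / ε ^ 2) = 4 * Real.log d + 2 * Real.log (1 / ε) := by
    rw [Real.log_div (by positivity) (by positivity), Real.log_pow, Real.log_pow, one_div,
      Real.log_inv]
    ring
  have htail : 4 * c * d / √(d ^ 4 / ε ^ 2) = c * (4 * ε / d) := by
    rw [show d ^ 4 / ε ^ 2 = (d ^ 2 / ε) ^ 2 by ring, Real.sqrt_sq (by positivity)]
    field_simp
  have hεd : 4 * ε / d ≤ 2 * ε * Real.log (1 / ε) := by
    rw [div_le_iff₀ (by positivity)]
    nlinarith [mul_le_mul hE hd zero_le_two (by linarith)]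
  rw [hlogΛ, htail]
  nlinarith [mul_le_mul_of_nonneg_left hεd hc,
    mul_nonneg (mul_nonneg hε.le hc) (Real.log_nonneg (by linarith : 1 ≤ d))]

/-- connected correlation bound for the entanglement spectrum:
if all `A`–`B` connected correlations are bounded by `ε`, then for any
operator `O` on `B`,
`|C(Ĥ_A, O)| ≤ ε ‖O‖ (18 log d_A + 4 log(1/ε))`. -/
theorem entanglement_spectrum_connCorr_bound
    (ρ : Matrix (α × β) (α × β) ℂ) (hρ : IsDensityMatrix ρ)
    (hA : (ptrB ρ).PosDef) (hd : 2 ≤ Fintype.card α)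
    (ε : ℝ) (hε : 0 < ε) (hε' : ε < 1 / Real.exp 1)
    (hcorr : ∀ (O₁ : Matrix α α ℂ) (O₂ : Matrix β β ℂ),
      ‖connCorr ρ (extA O₁) (extB O₂)‖ ≤ opNorm O₁ * opNorm O₂ * ε)
    (O : Matrix β β ℂ) :
    ‖connCorr ρ (-(extA (matLog (ptrB ρ)))) (extB O)‖ ≤
      ε * opNorm O * (18 * Real.log (Fintype.card α) + 4 * Real.log (1 / ε)) := by
  have hd2 : (2 : ℝ) ≤ Fintype.card α := Nat.ofNat_le_cast.mpr hd
  have hE : 1 ≤ Real.log (1 / ε) := by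
    rw [Real.le_log_iff_exp_le (by positivity)]
    exact ((lt_one_div hε (Real.exp_pos 1)).mp hε').le
  have hε1 : ε < 1 :=
    hε'.trans (by rw [div_lt_one (Real.exp_pos 1)]; exact Real.one_lt_exp_iff.mpr one_pos)
  have hΛ : 1 ≤ (Fintype.card α : ℝ) ^ 4 / ε ^ 2 := by
    rw [le_div_iff₀ (by positivity), one_mul]
    calc ε ^ 2 ≤ 1 := by nlinarith
      _ ≤ (Fintype.card α : ℝ) ^ 4 := one_le_pow₀ (by linarith)
  rw [opNorm_eq_norm]
  exact (norm_connCorr_neg_matLog_le hρ hA hε.le hcorr O hΛ).trans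
    (cutoff_bound_le hd2 hε hE (norm_nonneg O))
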